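/- Let G be a connected unweighted multigraph with incidence matrix B, and let A be any oblivious routing (B A χ = χ for all demands χ ⊥ 1). Then for any p ∈ [1,∞], the multi-commodity ℓp competitive ratio of A equals the induced operator norm ‖ |A B| ‖_{p→p}, where |A B| denotes the entrywise absolute value of A B. -/
import Mathlib


noncomputable section
open Matrix ENNReal

variable {V E : Type*} [Fintype V] [Fintype E] [DecidableEq V]

/-- The edge-vertex incidence matrix of a multigraph whose edge `e` is oriented
from `tail e` to `head e`. -/
def incMatrix (tail head : E → V) : Matrix V E ℝ :=
  fun v e => if v = tail e then 1 else if v = head e then -1 else 0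

/-- `Lp` satisfies the four Penrose conditions for `L`. -/
def IsMoorePenrose {V : Type*} [Fintype V] (L Lp : Matrix V V ℝ) : Prop :=
  L * Lp * L = L ∧ Lp * L * Lp = Lp ∧ (L * Lp)ᵀ = L * Lp ∧ (Lp * L)ᵀ = Lp * L

/-- Connectivity, expressed through the Laplacian: the kernel of `L` consists
exactly of the constant vectors. -/
def IsConnectedLap {V : Type*} [Fintype V] (L : Matrix V V ℝ) : Prop :=
  ∀ x : V → ℝ, L.mulVec x = 0 → ∃ c : ℝ, ∀ v, x v = c

/-- The volume of a vertex set: the sum of the degrees of its vertices. -/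
def gvol (tail head : E → V) (S : Finset V) : ℕ :=
  ∑ e : E, ((if tail e ∈ S then 1 else 0) + (if head e ∈ S then 1 else 0))

/-- The number of edges with exactly one endpoint in `S`. -/
def bdry (tail head : E → V) (S : Finset V) : ℕ :=
  (Finset.univ.filter fun e : E =>
    (tail e ∈ S ∧ head e ∉ S) ∨ (tail e ∉ S ∧ head e ∈ S)).card

/-- The multigraph is a `Φ`-expander: `|∂S| ≥ Φ·vol(S)` whenever
`vol(S) ≤ vol(V)/2`. -/
def IsExpander (tail head : E → V) (Φ : ℝ) : Prop :=
  ∀ S : Finset V, (gvol tail head S : ℝ) ≤ (gvol tail head Finset.univ : ℝ) / 2 →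
    (bdry tail head S : ℝ) ≥ Φ * gvol tail head S

/-- The ℓp norm of a finite real vector, for `p ∈ [1,∞]`. -/
def lpNormE {n : Type*} [Fintype n] (p : ℝ≥0∞) (x : n → ℝ) : ℝ :=
  if p = ⊤ then ⨆ i, |x i| else (∑ i, |x i| ^ p.toReal) ^ (1 / p.toReal)

/-- Operator norm of a matrix from ℓp to ℓp, for `p ∈ [1,∞]`. -/
def opNormE {m n : Type*} [Fintype m] [Fintype n] (p : ℝ≥0∞) (X : Matrix m n ℝ) : ℝ :=
  sSup {c | ∃ x : n → ℝ, x ≠ 0 ∧ c = lpNormE p (X.mulVec x) / lpNormE p x}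

/-- The congestion (in the ℓp sense) incurred by the multiset of flows `f`. -/
def cong {E : Type*} [Fintype E] (p : ℝ≥0∞) {k : ℕ} (f : Fin k → E → ℝ) : ℝ :=
  lpNormE p (fun e => ∑ i, |f i e|)

/-- The optimal ℓp congestion for routing the multiset of demands `χ`. -/
def opt {V E : Type*} [Fintype V] [Fintype E] (p : ℝ≥0∞) (B : Matrix V E ℝ)
    {k : ℕ} (χ : Fin k → V → ℝ) : ℝ :=
  sInf {c | ∃ f : Fin k → E → ℝ, (∀ i, B.mulVec (f i) = χ i) ∧ c = cong p f}

/-- The multi-commodity ℓp competitive ratio of the oblivious routing `A`. -/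
def compRatio {V E : Type*} [Fintype V] [Fintype E] (p : ℝ≥0∞)
    (B : Matrix V E ℝ) (A : Matrix E V ℝ) : ℝ :=
  sSup {r | ∃ (k : ℕ) (χ : Fin k → V → ℝ), (∀ i, ∑ v, χ i v = 0) ∧
    r = cong p (fun i => A.mulVec (χ i)) / opt p B χ}

section Aux
variable {n : Type*} [Fintype n] {p : ℝ≥0∞}

lemma real_add_rpow {a b t : ℝ} (ha : 0 ≤ a) (hb : 0 ≤ b) (ht : 1 ≤ t) :
    a ^ t + b ^ t ≤ (a + b) ^ t := by
  have := NNReal.add_rpow_le_rpow_add ⟨a, ha⟩ ⟨b, hb⟩ ht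
  exact_mod_cast this

lemma real_sum_rpow {s : Finset n} {f : n → ℝ} {t : ℝ} (hf : ∀ i ∈ s, 0 ≤ f i)
    (ht : 1 ≤ t) : ∑ i ∈ s, f i ^ t ≤ (∑ i ∈ s, f i) ^ t := by
  classical
  induction s using Finset.induction with
  | empty => simp [Real.zero_rpow (by positivity : t ≠ 0)]
  | @insert a s' hne ih =>
    rw [Finset.sum_insert hne, Finset.sum_insert hne]
    have h1 := ih (fun i hi => hf i (Finset.mem_insert_of_mem hi))
    have h2 : f a ^ t + ∑ i ∈ s', f i ^ t ≤ f a ^ t + (∑ i ∈ s', f i) ^ t := by linarith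
    refine h2.trans (real_add_rpow (hf a (Finset.mem_insert_self a s'))
      (Finset.sum_nonneg (fun i hi => hf i (Finset.mem_insert_of_mem hi))) ht)

lemma toReal_one_le (hp : 1 ≤ p) (hpt : p ≠ ⊤) : 1 ≤ p.toReal := by
  have := ENNReal.toReal_mono hpt hp
  simpa using this

lemma lpNormE_nonneg (x : n → ℝ) : 0 ≤ lpNormE p x := by
  unfold lpNormE
  split
  · exact Real.iSup_nonneg (fun i => abs_nonneg _)
  · positivity

lemma abs_le_lpNormE (hp : 1 ≤ p) (x : n → ℝ) (i : n) : |x i| ≤ lpNormE p x := by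
  unfold lpNormE
  split_ifs with h
  · exact le_ciSup (f := fun j => |x j|) (Set.Finite.bddAbove (Set.finite_range _)) i
  · have ht : 1 ≤ p.toReal := toReal_one_le hp h
    have ht0 : p.toReal ≠ 0 := by positivity
    have h1 : |x i| ^ p.toReal ≤ ∑ j, |x j| ^ p.toReal :=
      Finset.single_le_sum (f := fun j => |x j| ^ p.toReal) (fun j _ => by positivity)
        (Finset.mem_univ i)
    have h2 := Real.rpow_le_rpow (by positivity) h1
      (by positivity : (0:ℝ) ≤ 1 / p.toReal)
    rw [one_div]; rwa [one_div, Real.rpow_rpow_inv (abs_nonneg _) ht0] at h2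

lemma lpNormE_le_sum (hp : 1 ≤ p) (x : n → ℝ) : lpNormE p x ≤ ∑ i, |x i| := by
  unfold lpNormE
  split_ifs with h
  · rcases isEmpty_or_nonempty n with he | hne
    · simp [Real.iSup_of_isEmpty]
    · exact ciSup_le fun i =>
        Finset.single_le_sum (f := fun j => |x j|) (fun j _ => abs_nonneg _) (Finset.mem_univ i)
  · have ht : 1 ≤ p.toReal := toReal_one_le hp h
    have ht0 : p.toReal ≠ 0 := by positivity
    have h1 : ∑ i, |x i| ^ p.toReal ≤ (∑ i, |x i|) ^ p.toReal :=
      real_sum_rpow (fun i _ => abs_nonneg _) ht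
    have h2 := Real.rpow_le_rpow (by positivity) h1
      (by positivity : (0:ℝ) ≤ 1 / p.toReal)
    rw [one_div]
    rwa [one_div, Real.rpow_rpow_inv (Finset.sum_nonneg fun i _ => abs_nonneg _) ht0] at h2

lemma lpNormE_mono (hp : 1 ≤ p) {x y : n → ℝ} (h : ∀ i, |x i| ≤ |y i|) :
    lpNormE p x ≤ lpNormE p y := by
  unfold lpNormE
  split_ifs with hc
  · rcases isEmpty_or_nonempty n with he | hne
    · simp [Real.iSup_of_isEmpty]
    · exact ciSup_le fun i => (h i).trans
        (le_ciSup (f := fun j => |y j|) (Set.Finite.bddAbove (Set.finite_range _)) i)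
  · have ht : 1 ≤ p.toReal := toReal_one_le hp hc
    refine Real.rpow_le_rpow (by positivity) ?_ (by positivity)
    exact Finset.sum_le_sum fun i _ =>
      Real.rpow_le_rpow (abs_nonneg _) (h i) (by positivity)

lemma lpNormE_abs (x : n → ℝ) : lpNormE p (fun i => |x i|) = lpNormE p x := by
  simp [lpNormE, abs_abs]

lemma lpNormE_zero (hp : 1 ≤ p) : lpNormE p (0 : n → ℝ) = 0 := by
  refine le_antisymm ?_ (lpNormE_nonneg _)
  simpa using lpNormE_le_sum hp (0 : n → ℝ)

lemma lpNormE_pos (hp : 1 ≤ p) {x : n → ℝ} (hx : x ≠ 0) : 0 < lpNormE p x := by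
  obtain ⟨i, hi⟩ : ∃ i, x i ≠ 0 := by
    by_contra hc
    push_neg at hc
    exact hx (funext hc)
  exact lt_of_lt_of_le (abs_pos.2 hi) (abs_le_lpNormE hp x i)

end Aux

/-- For a connected unweighted multigraph and any oblivious routing `A`, the
multi-commodity ℓp competitive ratio of `A` equals `‖ |A B| ‖_{p→p}`. -/


theorem compRatio_eq_opNorm (tail head : E → V) (hloop : ∀ e, tail e ≠ head e)
    (B : Matrix V E ℝ) (hB : B = incMatrix tail head)
    (L : Matrix V V ℝ) (hL : L = B * Bᵀ)
    (hconn : IsConnectedLap L)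
    (A : Matrix E V ℝ)
    (hA : ∀ χ : V → ℝ, ∑ v, χ v = 0 → B.mulVec (A.mulVec χ) = χ)
    (p : ℝ≥0∞) (hp : 1 ≤ p) :
    compRatio p B A = opNormE p ((A * B).map fun a => |a|) := by
  classical
  set M : Matrix E E ℝ := (A * B).map fun a => |a| with hMdef
  set S : Set ℝ :=
    {c | ∃ x : E → ℝ, x ≠ 0 ∧ c = lpNormE p (M.mulVec x) / lpNormE p x} with hSdef
  set T : Set ℝ := {r | ∃ (k : ℕ) (χ : Fin k → V → ℝ), (∀ i, ∑ v, χ i v = 0) ∧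
    r = cong p (fun i => A.mulVec (χ i)) / opt p B χ} with hTdef
  have hcomp : compRatio p B A = sSup T := rfl
  have hop : opNormE p M = sSup S := rfl
  have hMnn : ∀ e j, 0 ≤ M e j := fun e j => abs_nonneg _
  -- S is bounded above
  have hSbdd : ∀ c ∈ S, c ≤ ∑ e : E, ∑ j : E, |M e j| := by
    rintro c ⟨x, hx, rfl⟩
    have hxpos := lpNormE_pos hp hx
    rw [div_le_iff₀ hxpos]
    calc lpNormE p (M.mulVec x) ≤ ∑ e, |M.mulVec x e| := lpNormE_le_sum hp _
      _ ≤ ∑ e, ∑ j, |M e j| * lpNormE p x := by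
          refine Finset.sum_le_sum fun e _ => ?_
          calc |M.mulVec x e| ≤ ∑ j, |M e j * x j| := Finset.abs_sum_le_sum_abs _ _
            _ ≤ ∑ j, |M e j| * lpNormE p x := by
                refine Finset.sum_le_sum fun j _ => ?_
                rw [abs_mul]
                exact mul_le_mul_of_nonneg_left (abs_le_lpNormE hp x j) (abs_nonneg _)
      _ = (∑ e : E, ∑ j : E, |M e j|) * lpNormE p x := by
          simp [Finset.sum_mul]
  have hSbddAbove : BddAbove S := ⟨_, hSbdd⟩
  set N : ℝ := sSup S with hNdef
  have hNnn : 0 ≤ N := by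
    rcases Set.eq_empty_or_nonempty S with hSe | ⟨c, hc⟩
    · rw [hNdef, hSe, Real.sSup_empty]
    · obtain ⟨x, hx, hceq⟩ := hc
      have h0 : (0:ℝ) ≤ c := hceq ▸ div_nonneg (lpNormE_nonneg _) (lpNormE_nonneg _)
      exact h0.trans (le_csSup hSbddAbove ⟨x, hx, hceq⟩)
  -- the key operator-norm bound
  have key : ∀ g : E → ℝ, lpNormE p (M.mulVec g) ≤ N * lpNormE p g := by
    intro g
    by_cases hg0 : g = 0
    · subst hg0
      rw [Matrix.mulVec_zero, lpNormE_zero hp, mul_zero]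
    · have hmem : lpNormE p (M.mulVec g) / lpNormE p g ∈ S := ⟨g, hg0, rfl⟩
      have h := le_csSup hSbddAbove hmem
      rw [div_le_iff₀ (lpNormE_pos hp hg0)] at h
      linarith
  -- every element of T is at most N
  have hub : ∀ r ∈ T, r ≤ N := by
    rintro r ⟨k, χ, hχ, rfl⟩
    set optS : Set ℝ :=
      {c | ∃ f : Fin k → E → ℝ, (∀ i, B.mulVec (f i) = χ i) ∧ c = cong p f} with hoptS
    have hoptdef : opt p B χ = sInf optS := rfl
    have hne : optS.Nonempty :=
      ⟨cong p (fun i => A.mulVec (χ i)), fun i => A.mulVec (χ i), fun i => hA _ (hχ i), rfl⟩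
    have hoptnn : 0 ≤ opt p B χ := by
      rw [hoptdef]
      exact Real.sInf_nonneg (by rintro c ⟨f, _, rfl⟩; exact lpNormE_nonneg _)
    have hmain : ∀ c ∈ optS, cong p (fun i => A.mulVec (χ i)) ≤ N * c := by
      rintro c ⟨f, hf, rfl⟩
      have h1 : cong p (fun i => A.mulVec (χ i))
          ≤ lpNormE p (M.mulVec (fun j => ∑ i, |f i j|)) := by
        refine lpNormE_mono hp fun e => ?_
        have hle : (∑ i, |A.mulVec (χ i) e|) ≤ M.mulVec (fun j => ∑ i, |f i j|) e := by
          calc ∑ i, |A.mulVec (χ i) e| ≤ ∑ i, ∑ j, |(A * B) e j| * |f i j| := by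
                refine Finset.sum_le_sum fun i _ => ?_
                rw [← hf i, Matrix.mulVec_mulVec]
                calc |(A * B).mulVec (f i) e| ≤ ∑ j, |(A * B) e j * f i j| :=
                      Finset.abs_sum_le_sum_abs _ _
                  _ = ∑ j, |(A * B) e j| * |f i j| := by simp [abs_mul]
            _ = M.mulVec (fun j => ∑ i, |f i j|) e := by
                rw [Finset.sum_comm]
                simp [Matrix.mulVec, dotProduct, hMdef, Matrix.map_apply, Finset.mul_sum]
        have hnn : 0 ≤ ∑ i, |A.mulVec (χ i) e| :=
          Finset.sum_nonneg fun i _ => abs_nonneg _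
        show abs (∑ i, |A.mulVec (χ i) e|) ≤ abs (M.mulVec (fun j => ∑ i, |f i j|) e)
        rw [abs_of_nonneg hnn, abs_of_nonneg (hnn.trans hle)]
        exact hle
      exact h1.trans (key _)
    by_cases hN0 : N = 0
    · obtain ⟨c0, hc0⟩ := hne
      have h0 : cong p (fun i => A.mulVec (χ i)) = 0 := by
        have h := hmain c0 hc0
        rw [hN0, zero_mul] at h
        exact le_antisymm h (lpNormE_nonneg _)
      rw [h0, zero_div]
      exact hNnn
    · have hNpos : 0 < N := lt_of_le_of_ne hNnn (Ne.symm hN0)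
      have hdivle : cong p (fun i => A.mulVec (χ i)) / N ≤ opt p B χ := by
        rw [hoptdef]
        refine le_csInf hne fun c hc => ?_
        rw [div_le_iff₀ hNpos]
        have := hmain c hc
        linarith
      have hcle : cong p (fun i => A.mulVec (χ i)) ≤ N * opt p B χ := by
        have := (div_le_iff₀ hNpos).1 hdivle
        linarith
      rcases eq_or_lt_of_le hoptnn with hopt0 | hoptpos
      · rw [← hopt0]
        simpa using hNnn
      · rw [div_le_iff₀ hoptpos]
        linarith
  have hTne : T.Nonempty := ⟨_, 0, fun i => i.elim0, fun i => i.elim0, rfl⟩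
  have hTbdd : BddAbove T := ⟨N, hub⟩
  have hTnn : ∀ r ∈ T, 0 ≤ r := by
    rintro r ⟨k, χ, hχ, rfl⟩
    refine div_nonneg (lpNormE_nonneg _) ?_
    exact Real.sInf_nonneg (by rintro c ⟨f, _, rfl⟩; exact lpNormE_nonneg _)
  -- lower bound: every element of S is at most sSup T
  have hlow : ∀ c ∈ S, c ≤ sSup T := by
    rintro c ⟨x, hx, rfl⟩
    set k := Fintype.card E with hk
    set σ : Fin k ≃ E := (Fintype.equivFin E).symm with hσ
    have hcolsum : ∀ e, ∑ v, B v e = 0 := by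
      intro e
      rw [hB]
      have h1 : ∀ v : V, incMatrix tail head v e
          = (if v = tail e then (1:ℝ) else 0) + (if v = head e then (-1:ℝ) else 0) := by
        intro v
        unfold incMatrix
        by_cases h1 : v = tail e
        · by_cases h2 : v = head e
          · exact absurd (h1.symm.trans h2) (hloop e)
          · simp [h1, h2, hloop e]
        · by_cases h2 : v = head e
          · simp [h1, h2, (hloop e).symm, Ne.symm (hloop e)]
          · simp [h1, h2]
      simp [h1, Finset.sum_add_distrib, Finset.sum_ite_eq']
    set χ : Fin k → V → ℝ := fun i v => x (σ i) * B v (σ i) with hχdef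
    have hχsum : ∀ i, ∑ v, χ i v = 0 := by
      intro i
      simp only [hχdef, ← Finset.mul_sum, hcolsum, mul_zero]
    set f : Fin k → E → ℝ := fun i j => if j = σ i then x (σ i) else 0 with hfdef
    have hBf : ∀ i, B.mulVec (f i) = χ i := by
      intro i
      funext v
      simp only [Matrix.mulVec, dotProduct, hfdef, mul_ite, mul_zero, hχdef]
      rw [Finset.sum_ite_eq' Finset.univ (σ i) (fun j => B v j * x (σ i))]
      rw [if_pos (Finset.mem_univ _), mul_comm]
    have hcongf : cong p f = lpNormE p x := by
      have heq : (fun e => ∑ i, |f i e|) = fun e => |x e| := by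
        funext e
        simp only [hfdef]
        have h2 : ∀ i : Fin k, |if e = σ i then x (σ i) else 0|
            = if i = σ.symm e then |x e| else 0 := by
          intro i
          by_cases h : e = σ i
          · simp [h, Equiv.symm_apply_apply]
          · have h' : i ≠ σ.symm e := fun hc => h (by rw [hc, Equiv.apply_symm_apply])
            simp [h, h']
        rw [Finset.sum_congr rfl fun i _ => h2 i]
        rw [Finset.sum_ite_eq' Finset.univ (σ.symm e) (fun _ => |x e|)]
        simp
      show lpNormE p (fun e => ∑ i, |f i e|) = lpNormE p x
      rw [heq, lpNormE_abs]
    have hcongA : cong p (fun i => A.mulVec (χ i))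
        = lpNormE p (M.mulVec fun j => |x j|) := by
      have heq : (fun e => ∑ i, |A.mulVec (χ i) e|)
          = fun e => M.mulVec (fun j => |x j|) e := by
        funext e
        have h1 : ∀ i, A.mulVec (χ i) e = (A * B) e (σ i) * x (σ i) := by
          intro i
          rw [← hBf i, Matrix.mulVec_mulVec]
          show ∑ j, (A * B) e j * f i j = _
          simp only [hfdef, mul_ite, mul_zero]
          rw [Finset.sum_ite_eq' Finset.univ (σ i) (fun j => (A * B) e j * x (σ i))]
          exact if_pos (Finset.mem_univ _)
        simp only [h1, abs_mul]
        rw [Equiv.sum_comp σ (fun j => |(A * B) e j| * |x j|)]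
        simp [Matrix.mulVec, dotProduct, hMdef, Matrix.map_apply]
      show lpNormE p (fun e => ∑ i, |A.mulVec (χ i) e|) = _
      rw [heq]
    set optS : Set ℝ :=
      {c | ∃ f' : Fin k → E → ℝ, (∀ i, B.mulVec (f' i) = χ i) ∧ c = cong p f'} with hoptS
    have hoptdef : opt p B χ = sInf optS := rfl
    have hne : optS.Nonempty := ⟨cong p f, f, hBf, rfl⟩
    have hoptle : opt p B χ ≤ lpNormE p x := by
      rw [hoptdef, ← hcongf]
      exact csInf_le ⟨0, by rintro c' ⟨f', _, rfl⟩; exact lpNormE_nonneg _⟩ ⟨f, hBf, rfl⟩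
    obtain ⟨e0, he0⟩ : ∃ e, x e ≠ 0 := by
      by_contra hc
      push_neg at hc
      exact hx (funext hc)
    have hcard : (0:ℝ) < Fintype.card E := by
      have : Nonempty E := ⟨e0⟩
      exact_mod_cast Fintype.card_pos
    have hδ : ∀ c' ∈ optS, |x e0| / (Fintype.card E : ℝ) ≤ c' := by
      rintro c' ⟨f', hf', rfl⟩
      have h1 : x e0 = χ (σ.symm e0) (tail e0) := by
        simp [hχdef, Equiv.apply_symm_apply, hB, incMatrix]
      have h2 : |χ (σ.symm e0) (tail e0)| ≤ ∑ j, |f' (σ.symm e0) j| := by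
        rw [← hf' (σ.symm e0)]
        calc |B.mulVec (f' (σ.symm e0)) (tail e0)|
            ≤ ∑ j, |B (tail e0) j * f' (σ.symm e0) j| := Finset.abs_sum_le_sum_abs _ _
          _ ≤ ∑ j, |f' (σ.symm e0) j| := by
              refine Finset.sum_le_sum fun j _ => ?_
              rw [abs_mul]
              have hBle : |B (tail e0) j| ≤ 1 := by
                rw [hB]; unfold incMatrix; split_ifs <;> norm_num
              calc |B (tail e0) j| * |f' (σ.symm e0) j|
                  ≤ 1 * |f' (σ.symm e0) j| :=
                    mul_le_mul_of_nonneg_right hBle (abs_nonneg _)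
                _ = |f' (σ.symm e0) j| := one_mul _
      have h3 : ∑ j, |f' (σ.symm e0) j| ≤ ∑ j : E, (∑ i, |f' i j|) :=
        Finset.sum_le_sum fun j _ =>
          Finset.single_le_sum (f := fun i => |f' i j|) (fun i _ => abs_nonneg _)
            (Finset.mem_univ _)
      have h4 : ∑ j : E, (∑ i, |f' i j|) ≤ (Fintype.card E : ℝ) * cong p f' := by
        have hj : ∀ j : E, (∑ i, |f' i j|) ≤ cong p f' := by
          intro j
          have h := abs_le_lpNormE hp (fun e => ∑ i, |f' i e|) j
          rwa [abs_of_nonneg (Finset.sum_nonneg fun i _ => abs_nonneg _)] at h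
        calc ∑ j : E, (∑ i, |f' i j|) ≤ ∑ _j : E, cong p f' :=
              Finset.sum_le_sum fun j _ => hj j
          _ = (Fintype.card E : ℝ) * cong p f' := by
              simp [Finset.sum_const, Finset.card_univ, nsmul_eq_mul]
      rw [div_le_iff₀ hcard]
      rw [h1]
      calc |χ (σ.symm e0) (tail e0)| ≤ ∑ j, |f' (σ.symm e0) j| := h2
        _ ≤ ∑ j : E, (∑ i, |f' i j|) := h3
        _ ≤ (Fintype.card E : ℝ) * cong p f' := h4
        _ = cong p f' * (Fintype.card E : ℝ) := mul_comm _ _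
    have hoptpos : 0 < opt p B χ := by
      rw [hoptdef]
      exact lt_of_lt_of_le (div_pos (abs_pos.2 he0) hcard) (le_csInf hne hδ)
    have hrmem : cong p (fun i => A.mulVec (χ i)) / opt p B χ ∈ T := ⟨k, χ, hχsum, rfl⟩
    have hnum : lpNormE p (M.mulVec x) ≤ lpNormE p (M.mulVec fun j => |x j|) := by
      refine lpNormE_mono hp fun e => ?_
      have h1 : |M.mulVec x e| ≤ M.mulVec (fun j => |x j|) e := by
        calc |M.mulVec x e| ≤ ∑ j, |M e j * x j| := Finset.abs_sum_le_sum_abs _ _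
          _ = ∑ j, M e j * |x j| := by
              refine Finset.sum_congr rfl fun j _ => ?_
              rw [abs_mul, abs_of_nonneg (hMnn e j)]
          _ = M.mulVec (fun j => |x j|) e := rfl
      calc |M.mulVec x e| ≤ M.mulVec (fun j => |x j|) e := h1
        _ = |M.mulVec (fun j => |x j|) e| := (abs_of_nonneg ((abs_nonneg _).trans h1)).symm
    have hfinal : lpNormE p (M.mulVec x) / lpNormE p x
        ≤ cong p (fun i => A.mulVec (χ i)) / opt p B χ := by
      rw [hcongA]
      exact div_le_div₀ (lpNormE_nonneg _) hnum hoptpos hoptle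
    exact hfinal.trans (le_csSup hTbdd hrmem)
  rw [hcomp, hop]
  refine le_antisymm (csSup_le hTne hub) ?_
  rcases Set.eq_empty_or_nonempty S with hSe | hSne
  · have hN0 : N = 0 := by rw [hNdef, hSe, Real.sSup_empty]
    rw [hN0]
    obtain ⟨r, hr⟩ := hTne
    exact le_csSup_of_le hTbdd hr (hTnn r hr)
  · exact csSup_le hSne hlow
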